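/- arXiv:1901.10261 — 2 statements merged into one kernel-verified Lean document; each statement's English description precedes it below -/
import Mathlib

section
/- Let A, B be bounded operators on a complex Banach space such that the spectrum σ(A) is 2πi-congruence free, and assume Wermuth's theorem holds (if both σ(A) and σ(B') are 2πi-congruence free and exp(A)exp(B') = exp(B')exp(A), then AB' = B'A). Then exp(A)·B = B·exp(A) implies A·B = B·A. -/
open NormedSpace

def CongruenceFree (z : ℂ) (S : Set ℂ) : Prop :=
  ∀ s₁ ∈ S, ∀ s₂ ∈ S, ∀ k : ℤ, k ≠ 0 → s₁ - s₂ ≠ (k : ℂ) * z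

/- Exponentials that commute with `B` also commute with every `exp (c • B)`, so Wermuth's theorem
applies as soon as some nonzero multiple `c • B` has congruence-free spectrum; shrinking `B` puts its
spectrum inside the disc of radius `π`, where no two points differ by a nonzero multiple of `2πi`. -/

theorem CongruenceFree.of_subset_ball {z : ℂ} {S : Set ℂ} (hS : S ⊆ Metric.ball 0 (‖z‖ / 2)) :
    CongruenceFree z S := by
  intro s₁ hs₁ s₂ hs₂ k hk heq
  have h₁ : ‖s₁‖ < ‖z‖ / 2 := mem_ball_zero_iff.mp (hS hs₁)
  have h₂ : ‖s₂‖ < ‖z‖ / 2 := mem_ball_zero_iff.mp (hS hs₂)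
  have hk : (1 : ℝ) ≤ ‖(k : ℂ)‖ := by
    rw [Complex.norm_intCast]
    exact_mod_cast Int.one_le_abs hk
  have : ‖(k : ℂ) * z‖ < ‖z‖ := by
    rw [← heq]
    linarith [norm_sub_le s₁ s₂]
  rw [norm_mul] at this
  nlinarith [norm_nonneg z]

theorem exists_smul_spectrum_subset_ball {A : Type*} [NormedRing A] [NormedAlgebra ℂ A]
    [CompleteSpace A] (a : A) {r : ℝ} (hr : 0 < r) :
    ∃ c : ℂ, c ≠ 0 ∧ spectrum ℂ (c • a) ⊆ Metric.ball 0 r := by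
  set t := ‖a‖ * ‖(1 : A)‖ + 1
  have ht : 0 < t := by positivity
  refine ⟨(r / (2 * t) : ℝ), by exact_mod_cast (by positivity : r / (2 * t) ≠ 0), ?_⟩
  refine (spectrum.subset_closedBall_norm_mul _).trans (Metric.closedBall_subset_ball ?_)
  calc ‖((r / (2 * t) : ℝ) : ℂ) • a‖ * ‖(1 : A)‖
      ≤ r / (2 * t) * ‖a‖ * ‖(1 : A)‖ := by
        rw [norm_smul, Complex.norm_real, Real.norm_of_nonneg (by positivity)]
    _ ≤ r / (2 * t) * t := by
        rw [mul_assoc]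
        gcongr
        linarith
    _ < r := by
        rw [div_mul_eq_mul_div, mul_div_mul_right _ _ ht.ne']
        linarith

theorem stmt5 {X : Type*} [NormedAddCommGroup X] [NormedSpace ℂ X] [CompleteSpace X]
    (A B : X →L[ℂ] X)
    (hA : CongruenceFree (2 * Real.pi * Complex.I) (spectrum ℂ A))
    (wermuth : ∀ C D : X →L[ℂ] X,
      CongruenceFree (2 * Real.pi * Complex.I) (spectrum ℂ C) →
      CongruenceFree (2 * Real.pi * Complex.I) (spectrum ℂ D) →
      exp C * exp D = exp D * exp C → C * D = D * C)
    (h : exp A * B = B * exp A) : A * B = B * A := by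
  obtain ⟨c, hc, hspec⟩ := exists_smul_spectrum_subset_ball B
    (r := ‖2 * Real.pi * Complex.I‖ / 2) (by simp)
  have hcomm : Commute A (c • B) :=
    wermuth A (c • B) hA (.of_subset_ball hspec) ((Commute.smul_right h c).exp_right)
  rw [Commute, SemiconjBy, mul_smul_comm, smul_mul_assoc] at hcomm
  exact smul_right_injective _ hc hcomm
end

section
/- Let A, B be bounded operators on a complex Hilbert space with A normal and σ(Im A) ⊆ (0, π). Assuming Wermuth's theorem (commuting exponentials of operators with 2πi-congruence free spectra implies commuting operators), we have exp(A)·B = B·exp(A) if and only if A·B = B·A. -/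
/-!
For normal `A` the continuous functional calculus gives `σ(Im A) = Im '' σ(A)`, so `σ(A)` lies in
the strip `0 < Im z < π`; its points cannot differ by a nonzero multiple of `2πi`. Rescaling `B` by
a small `t ≠ 0` puts `σ(t • B)` in the strip `|Im z| < π`, which is again congruence free. Since
`exp A` commutes with `B`, it commutes with `exp (t • B)`, and Wermuth's theorem gives
`A (t • B) = (t • B) A`.
-/

open ContinuousLinearMap Complex Real NormedSpace

open scoped ComplexStarModule

lemma congruenceFree_two_pi_I_of_im_mem_Ioo {S : Set ℂ} {c d : ℝ} (hcd : d ≤ c + 2 * π)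
    (hS : ∀ s ∈ S, s.im ∈ Set.Ioo c d) :
    CongruenceFree (2 * (π : ℂ) * I) S := by
  intro s₁ h₁ s₂ h₂ k hk heq
  have him : s₁.im - s₂.im = k * (2 * π) := by simpa using congrArg Complex.im heq
  have hk1 : (1 : ℝ) ≤ |(k : ℝ)| := by exact_mod_cast Int.one_le_abs hk
  have hlt : |(k : ℝ)| * (2 * π) < 1 * (2 * π) := by
    rw [← abs_of_pos two_pi_pos, ← abs_mul, ← him, abs_of_pos two_pi_pos, one_mul, abs_sub_lt_iff]
    constructor <;> linarith [(hS s₁ h₁).1, (hS s₁ h₁).2, (hS s₂ h₂).1, (hS s₂ h₂).2]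
  linarith [mul_le_mul_of_nonneg_right hk1 two_pi_pos.le]

lemma exists_ne_zero_congruenceFree_spectrum_smul {𝔸 : Type*} [NormedRing 𝔸]
    [NormedAlgebra ℂ 𝔸] [CompleteSpace 𝔸] (b : 𝔸) :
    ∃ t : ℂ, t ≠ 0 ∧ CongruenceFree (2 * (π : ℂ) * I) (spectrum ℂ (t • b)) := by
  set C := ‖b‖ * ‖(1 : 𝔸)‖
  set t : ℝ := π / (C + 1)
  have ht : 0 < t := by positivity
  refine ⟨t, by exact_mod_cast ht.ne',
    congruenceFree_two_pi_I_of_im_mem_Ioo (c := -π) (by linarith) fun s hs => ?_⟩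
  have hs : ‖s‖ ≤ t * C := by
    have := spectrum.subset_closedBall_norm_mul ((t : ℂ) • b) hs
    rwa [mem_closedBall_zero_iff, norm_smul, norm_real, norm_of_nonneg ht.le, mul_assoc] at this
  have htC : t * C < π := by
    rw [div_mul_eq_mul_div, div_lt_iff₀ (by positivity)]
    nlinarith [pi_pos, (by positivity : 0 ≤ C)]
  have := abs_le.mp ((abs_im_le_norm s).trans hs)
  constructor <;> linarith

lemma coe_imaginaryPart_eq_smul_sub_star {A : Type*} [AddCommGroup A] [Module ℂ A]
    [StarAddMonoid A] [StarModule ℂ A] (a : A) :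
    (ℑ a : A) = (1 / (2 * I) : ℂ) • (a - star a) := by
  rw [imaginaryPart_apply_coe, ← Complex.coe_smul, smul_smul]
  congr 1
  field_simp
  simp

theorem stmt16 {H : Type*} [NormedAddCommGroup H] [InnerProductSpace ℂ H]
    [CompleteSpace H] (A B : H →L[ℂ] H)
    (hA : A * adjoint A = adjoint A * A)
    (hIm : spectrum ℂ ((1 / (2 * I) : ℂ) • (A - adjoint A)) ⊆
      (fun x : ℝ => (x : ℂ)) '' Set.Ioo 0 π)
    (wermuth : ∀ C D : H →L[ℂ] H,
      CongruenceFree (2 * (π : ℂ) * I) (spectrum ℂ C) →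
      CongruenceFree (2 * (π : ℂ) * I) (spectrum ℂ D) →
      exp C * exp D = exp D * exp C → C * D = D * C) :
    exp A * B = B * exp A ↔ A * B = B * A := by
  refine ⟨fun h => ?_, fun h => (Commute.exp_left h).eq⟩
  have : IsStarNormal A := ⟨by rw [star_eq_adjoint]; exact hA.symm⟩
  rw [← star_eq_adjoint, ← coe_imaginaryPart_eq_smul_sub_star, spectrum_imaginaryPart A] at hIm
  have hstrip : ∀ z ∈ spectrum ℂ A, z.im ∈ Set.Ioo 0 π := fun z hz => by
    obtain ⟨x, hx, hxz⟩ := hIm ⟨z, hz, rfl⟩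
    rwa [← ofReal_inj.mp hxz]
  obtain ⟨t, ht, hB⟩ := exists_ne_zero_congruenceFree_spectrum_smul B
  have hAtB : Commute A (t • B) :=
    wermuth A _ (congruenceFree_two_pi_I_of_im_mem_Ioo (by linarith [pi_pos]) hstrip) hB
      (Commute.smul_right h t).exp_right
  exact (Commute.smul_right_iff₀ ht).mp hAtB
end
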